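/- Action Sensibility (analytic clause): If Γ ⊢ ê◇ ⇐ τ (the cursor erasure of the Z-expression ê analyzes against H-type τ under context Γ) and the analytic action judgement Γ ⊢ ê --α--> ê' ⇐ τ holds for some action α, then Γ ⊢ ê'◇ ⇐ τ (the cursor erasure of the resulting Z-expression analyzes against the same type τ). -/
import Mathlib


/-! Hazelnut: H-types, H-expressions, bidirectional statics,
    Z-types, Z-expressions, and the bidirectional action semantics. -/

inductive HTyp : Type
  | num : HTyp
  | arr : HTyp → HTyp → HTyp
  | hole : HTyp
  deriving DecidableEq

inductive HExp : Type
  | var : String → HExp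
  | lam : String → HExp → HExp
  | ap : HExp → HExp → HExp
  | lit : Nat → HExp
  | plus : HExp → HExp → HExp
  | asc : HExp → HTyp → HExp
  | hole : HExp
  | nehole : HExp → HExp
  deriving DecidableEq

/-- Typing contexts map variables to hypothesized H-types. -/
def Ctx : Type := String → Option HTyp

/-- Context extension Γ, x : τ. -/
def Ctx.extend (Γ : Ctx) (x : String) (τ : HTyp) : Ctx :=
  fun y => if y = x then some τ else Γ y

/-- Type consistency τ ~ τ'. -/
inductive Consistent : HTyp → HTyp → Prop
  | holeR (τ : HTyp) : Consistent τ .hole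
  | holeL (τ : HTyp) : Consistent .hole τ
  | refl (τ : HTyp) : Consistent τ τ
  | arr {τ₁ τ₂ τ₁' τ₂' : HTyp} :
      Consistent τ₁ τ₁' → Consistent τ₂ τ₂' →
      Consistent (.arr τ₁ τ₂) (.arr τ₁' τ₂')

/-- Type inconsistency τ ≁ τ'. -/
inductive Inconsistent : HTyp → HTyp → Prop
  | numArr (τ₁ τ₂ : HTyp) : Inconsistent .num (.arr τ₁ τ₂)
  | arrNum (τ₁ τ₂ : HTyp) : Inconsistent (.arr τ₁ τ₂) .num
  | arr1 {τ₁ τ₂ τ₃ τ₄ : HTyp} :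
      Inconsistent τ₁ τ₃ → Inconsistent (.arr τ₁ τ₂) (.arr τ₃ τ₄)
  | arr2 {τ₁ τ₂ τ₃ τ₄ : HTyp} :
      Inconsistent τ₂ τ₄ → Inconsistent (.arr τ₁ τ₂) (.arr τ₃ τ₄)

/-- Matched arrow type: τ ▸ τ₁ → τ₂. -/
inductive MArr : HTyp → HTyp → HTyp → Prop
  | hole : MArr .hole .hole .hole
  | arr (τ₁ τ₂ : HTyp) : MArr (.arr τ₁ τ₂) τ₁ τ₂

mutual
  /-- Type synthesis: Γ ⊢ e ⇒ τ. -/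
  inductive Syn : Ctx → HExp → HTyp → Prop
    | var {Γ : Ctx} {x : String} {τ : HTyp} :
        Γ x = some τ → Syn Γ (.var x) τ
    | asc {Γ : Ctx} {e : HExp} {τ : HTyp} :
        Ana Γ e τ → Syn Γ (.asc e τ) τ
    | ap {Γ : Ctx} {e₁ e₂ : HExp} {τ₁ τ₂ τ : HTyp} :
        Syn Γ e₁ τ₁ → MArr τ₁ τ₂ τ → Ana Γ e₂ τ₂ → Syn Γ (.ap e₁ e₂) τ
    | lit {Γ : Ctx} (n : Nat) : Syn Γ (.lit n) .num
    | plus {Γ : Ctx} {e₁ e₂ : HExp} :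
        Ana Γ e₁ .num → Ana Γ e₂ .num → Syn Γ (.plus e₁ e₂) .num
    | hole {Γ : Ctx} : Syn Γ .hole .hole
    | nehole {Γ : Ctx} {e : HExp} {τ : HTyp} :
        Syn Γ e τ → Syn Γ (.nehole e) .hole

  /-- Type analysis: Γ ⊢ e ⇐ τ. -/
  inductive Ana : Ctx → HExp → HTyp → Prop
    | lam {Γ : Ctx} {x : String} {e : HExp} {τ τ₁ τ₂ : HTyp} :
        MArr τ τ₁ τ₂ → Ana (Γ.extend x τ₁) e τ₂ → Ana Γ (.lam x e) τ
    | subsume {Γ : Ctx} {e : HExp} {τ τ' : HTyp} :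
        Syn Γ e τ' → Consistent τ τ' → Ana Γ e τ
end

/-- Z-types: H-types with a cursor. -/
inductive ZTyp : Type
  | cursor : HTyp → ZTyp
  | arrL : ZTyp → HTyp → ZTyp
  | arrR : HTyp → ZTyp → ZTyp
  deriving DecidableEq

/-- Z-expressions: H-expressions with a cursor. -/
inductive ZExp : Type
  | cursor : HExp → ZExp
  | lam : String → ZExp → ZExp
  | apL : ZExp → HExp → ZExp
  | apR : HExp → ZExp → ZExp
  | plusL : ZExp → HExp → ZExp
  | plusR : HExp → ZExp → ZExp
  | ascL : ZExp → HTyp → ZExp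
  | ascR : HExp → ZTyp → ZExp
  | nehole : ZExp → ZExp
  deriving DecidableEq

/-- Cursor erasure for Z-types: τ̂◇. -/
def ZTyp.erase : ZTyp → HTyp
  | .cursor τ => τ
  | .arrL zt τ => .arr zt.erase τ
  | .arrR τ zt => .arr τ zt.erase

/-- Cursor erasure for Z-expressions: ê◇. -/
def ZExp.erase : ZExp → HExp
  | .cursor e => e
  | .lam x ze => .lam x ze.erase
  | .apL ze e => .ap ze.erase e
  | .apR e ze => .ap e ze.erase
  | .plusL ze e => .plus ze.erase e
  | .plusR e ze => .plus e ze.erase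
  | .ascL ze τ => .asc ze.erase τ
  | .ascR e zt => .asc e zt.erase
  | .nehole ze => .nehole ze.erase

inductive Dir : Type
  | child : Nat → Dir
  | parent : Dir
  deriving DecidableEq

inductive Shape : Type
  | arrow : Shape
  | num : Shape
  | asc : Shape
  | var : String → Shape
  | lam : String → Shape
  | ap : Shape
  | lit : Nat → Shape
  | plus : Shape
  | nehole : Shape
  deriving DecidableEq

inductive HAction : Type
  | move : Dir → HAction
  | construct : Shape → HAction
  | del : HAction
  | finish : HAction
  deriving DecidableEq

/-- Type actions: τ̂ --α--> τ̂'. -/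
inductive TAct : ZTyp → HAction → ZTyp → Prop
  | arrChild1 {τ₁ τ₂ : HTyp} :
      TAct (.cursor (.arr τ₁ τ₂)) (.move (.child 1)) (.arrL (.cursor τ₁) τ₂)
  | arrChild2 {τ₁ τ₂ : HTyp} :
      TAct (.cursor (.arr τ₁ τ₂)) (.move (.child 2)) (.arrR τ₁ (.cursor τ₂))
  | arrParent1 {τ₁ τ₂ : HTyp} :
      TAct (.arrL (.cursor τ₁) τ₂) (.move .parent) (.cursor (.arr τ₁ τ₂))
  | arrParent2 {τ₁ τ₂ : HTyp} :
      TAct (.arrR τ₁ (.cursor τ₂)) (.move .parent) (.cursor (.arr τ₁ τ₂))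
  | del {τ : HTyp} : TAct (.cursor τ) .del (.cursor .hole)
  | conArrow {τ : HTyp} :
      TAct (.cursor τ) (.construct .arrow) (.arrR τ (.cursor .hole))
  | conNum : TAct (.cursor .hole) (.construct .num) (.cursor .num)
  | zip1 {zt zt' : ZTyp} {α : HAction} {τ : HTyp} :
      TAct zt α zt' → TAct (.arrL zt τ) α (.arrL zt' τ)
  | zip2 {zt zt' : ZTyp} {α : HAction} {τ : HTyp} :
      TAct zt α zt' → TAct (.arrR τ zt) α (.arrR τ zt')

/-- Expression movement: ê --move δ--> ê'. -/
inductive EMove : ZExp → Dir → ZExp → Prop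
  | ascChild1 {e : HExp} {τ : HTyp} :
      EMove (.cursor (.asc e τ)) (.child 1) (.ascL (.cursor e) τ)
  | ascChild2 {e : HExp} {τ : HTyp} :
      EMove (.cursor (.asc e τ)) (.child 2) (.ascR e (.cursor τ))
  | ascParent1 {e : HExp} {τ : HTyp} :
      EMove (.ascL (.cursor e) τ) .parent (.cursor (.asc e τ))
  | ascParent2 {e : HExp} {τ : HTyp} :
      EMove (.ascR e (.cursor τ)) .parent (.cursor (.asc e τ))
  | lamChild1 {x : String} {e : HExp} :
      EMove (.cursor (.lam x e)) (.child 1) (.lam x (.cursor e))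
  | lamParent {x : String} {e : HExp} :
      EMove (.lam x (.cursor e)) .parent (.cursor (.lam x e))
  | plusChild1 {e₁ e₂ : HExp} :
      EMove (.cursor (.plus e₁ e₂)) (.child 1) (.plusL (.cursor e₁) e₂)
  | plusChild2 {e₁ e₂ : HExp} :
      EMove (.cursor (.plus e₁ e₂)) (.child 2) (.plusR e₁ (.cursor e₂))
  | plusParent1 {e₁ e₂ : HExp} :
      EMove (.plusL (.cursor e₁) e₂) .parent (.cursor (.plus e₁ e₂))
  | plusParent2 {e₁ e₂ : HExp} :
      EMove (.plusR e₁ (.cursor e₂)) .parent (.cursor (.plus e₁ e₂))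
  | apChild1 {e₁ e₂ : HExp} :
      EMove (.cursor (.ap e₁ e₂)) (.child 1) (.apL (.cursor e₁) e₂)
  | apChild2 {e₁ e₂ : HExp} :
      EMove (.cursor (.ap e₁ e₂)) (.child 2) (.apR e₁ (.cursor e₂))
  | apParent1 {e₁ e₂ : HExp} :
      EMove (.apL (.cursor e₁) e₂) .parent (.cursor (.ap e₁ e₂))
  | apParent2 {e₁ e₂ : HExp} :
      EMove (.apR e₁ (.cursor e₂)) .parent (.cursor (.ap e₁ e₂))
  | neholeChild1 {e : HExp} :
      EMove (.cursor (.nehole e)) (.child 1) (.nehole (.cursor e))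
  | neholeParent {e : HExp} :
      EMove (.nehole (.cursor e)) .parent (.cursor (.nehole e))
  | ascZip1 {ze ze' : ZExp} {δ : Dir} {τ : HTyp} :
      EMove ze δ ze' → EMove (.ascL ze τ) δ (.ascL ze' τ)
  | ascZip2 {zt zt' : ZTyp} {δ : Dir} {e : HExp} :
      TAct zt (.move δ) zt' → EMove (.ascR e zt) δ (.ascR e zt')
  | lamZip {x : String} {ze ze' : ZExp} {δ : Dir} :
      EMove ze δ ze' → EMove (.lam x ze) δ (.lam x ze')
  | apZip1 {ze ze' : ZExp} {δ : Dir} {e : HExp} :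
      EMove ze δ ze' → EMove (.apL ze e) δ (.apL ze' e)
  | apZip2 {ze ze' : ZExp} {δ : Dir} {e : HExp} :
      EMove ze δ ze' → EMove (.apR e ze) δ (.apR e ze')
  | plusZip1 {ze ze' : ZExp} {δ : Dir} {e : HExp} :
      EMove ze δ ze' → EMove (.plusL ze e) δ (.plusL ze' e)
  | plusZip2 {ze ze' : ZExp} {δ : Dir} {e : HExp} :
      EMove ze δ ze' → EMove (.plusR e ze) δ (.plusR e ze')
  | neholeZip {ze ze' : ZExp} {δ : Dir} :
      EMove ze δ ze' → EMove (.nehole ze) δ (.nehole ze')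

mutual
  /-- Synthetic action judgement: Γ ⊢ ê ⇒ τ --α--> ê' ⇒ τ'. -/
  inductive SynAct : Ctx → ZExp → HTyp → HAction → ZExp → HTyp → Prop
    | move {Γ : Ctx} {ze ze' : ZExp} {τ : HTyp} {δ : Dir} :
        EMove ze δ ze' → SynAct Γ ze τ (.move δ) ze' τ
    | del {Γ : Ctx} {e : HExp} {τ : HTyp} :
        SynAct Γ (.cursor e) τ .del (.cursor .hole) .hole
    | conAsc {Γ : Ctx} {e : HExp} {τ : HTyp} :
        SynAct Γ (.cursor e) τ (.construct .asc) (.ascR e (.cursor τ)) τ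
    | conVar {Γ : Ctx} {x : String} {τ : HTyp} :
        Γ x = some τ →
        SynAct Γ (.cursor .hole) .hole (.construct (.var x)) (.cursor (.var x)) τ
    | conLam {Γ : Ctx} {x : String} :
        SynAct Γ (.cursor .hole) .hole (.construct (.lam x))
          (.ascR (.lam x .hole) (.arrL (.cursor .hole) .hole)) (.arr .hole .hole)
    | conApArr {Γ : Ctx} {e : HExp} {τ τ₁ τ₂ : HTyp} :
        MArr τ τ₁ τ₂ →
        SynAct Γ (.cursor e) τ (.construct .ap) (.apR e (.cursor .hole)) τ₂
    | conApOtw {Γ : Ctx} {e : HExp} {τ : HTyp} :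
        Inconsistent τ (.arr .hole .hole) →
        SynAct Γ (.cursor e) τ (.construct .ap)
          (.apR (.nehole e) (.cursor .hole)) .hole
    | conLit {Γ : Ctx} {n : Nat} :
        SynAct Γ (.cursor .hole) .hole (.construct (.lit n)) (.cursor (.lit n)) .num
    | conPlus1 {Γ : Ctx} {e : HExp} {τ : HTyp} :
        Consistent τ .num →
        SynAct Γ (.cursor e) τ (.construct .plus) (.plusR e (.cursor .hole)) .num
    | conPlus2 {Γ : Ctx} {e : HExp} {τ : HTyp} :
        Inconsistent τ .num →
        SynAct Γ (.cursor e) τ (.construct .plus)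
          (.plusR (.nehole e) (.cursor .hole)) .num
    | conNEHole {Γ : Ctx} {e : HExp} {τ : HTyp} :
        SynAct Γ (.cursor e) τ (.construct .nehole) (.nehole (.cursor e)) .hole
    | finish {Γ : Ctx} {e : HExp} {τ' : HTyp} :
        Syn Γ e τ' →
        SynAct Γ (.cursor (.nehole e)) .hole .finish (.cursor e) τ'
    | zipAsc1 {Γ : Ctx} {ze ze' : ZExp} {τ : HTyp} {α : HAction} :
        AnaAct Γ ze τ α ze' →
        SynAct Γ (.ascL ze τ) τ α (.ascL ze' τ) τ
    | zipAsc2 {Γ : Ctx} {e : HExp} {zt zt' : ZTyp} {α : HAction} :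
        TAct zt α zt' → Ana Γ e zt'.erase →
        SynAct Γ (.ascR e zt) zt.erase α (.ascR e zt') zt'.erase
    | zipApArr {Γ : Ctx} {ze ze' : ZExp} {e : HExp} {τ₁ τ₂ τ₃ τ₄ τ₅ : HTyp} {α : HAction} :
        Syn Γ ze.erase τ₂ → SynAct Γ ze τ₂ α ze' τ₃ →
        MArr τ₃ τ₄ τ₅ → Ana Γ e τ₄ →
        SynAct Γ (.apL ze e) τ₁ α (.apL ze' e) τ₅
    | zipApAna {Γ : Ctx} {ze ze' : ZExp} {e : HExp} {τ₁ τ₂ τ₃ τ₄ : HTyp} {α : HAction} :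
        Syn Γ e τ₂ → MArr τ₂ τ₃ τ₄ → AnaAct Γ ze τ₃ α ze' →
        SynAct Γ (.apR e ze) τ₁ α (.apR e ze') τ₄
    | zipPlus1 {Γ : Ctx} {ze ze' : ZExp} {e : HExp} {α : HAction} :
        AnaAct Γ ze .num α ze' →
        SynAct Γ (.plusL ze e) .num α (.plusL ze' e) .num
    | zipPlus2 {Γ : Ctx} {ze ze' : ZExp} {e : HExp} {α : HAction} :
        AnaAct Γ ze .num α ze' →
        SynAct Γ (.plusR e ze) .num α (.plusR e ze') .num
    | zipHole {Γ : Ctx} {ze ze' : ZExp} {τ τ' : HTyp} {α : HAction} :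
        Syn Γ ze.erase τ → SynAct Γ ze τ α ze' τ' →
        SynAct Γ (.nehole ze) .hole α (.nehole ze') .hole

  /-- Analytic action judgement: Γ ⊢ ê --α--> ê' ⇐ τ. -/
  inductive AnaAct : Ctx → ZExp → HTyp → HAction → ZExp → Prop
    | subsume {Γ : Ctx} {ze ze' : ZExp} {τ τ' τ'' : HTyp} {α : HAction} :
        Syn Γ ze.erase τ' → SynAct Γ ze τ' α ze' τ'' → Consistent τ τ'' →
        AnaAct Γ ze τ α ze'
    | move {Γ : Ctx} {ze ze' : ZExp} {τ : HTyp} {δ : Dir} :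
        EMove ze δ ze' → AnaAct Γ ze τ (.move δ) ze'
    | del {Γ : Ctx} {e : HExp} {τ : HTyp} :
        AnaAct Γ (.cursor e) τ .del (.cursor .hole)
    | conAsc {Γ : Ctx} {e : HExp} {τ : HTyp} :
        AnaAct Γ (.cursor e) τ (.construct .asc) (.ascR e (.cursor τ))
    | conVar {Γ : Ctx} {x : String} {τ τ' : HTyp} :
        Γ x = some τ' → Inconsistent τ τ' →
        AnaAct Γ (.cursor .hole) τ (.construct (.var x)) (.nehole (.cursor (.var x)))
    | conLam1 {Γ : Ctx} {x : String} {τ τ₁ τ₂ : HTyp} :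
        MArr τ τ₁ τ₂ →
        AnaAct Γ (.cursor .hole) τ (.construct (.lam x)) (.lam x (.cursor .hole))
    | conLam2 {Γ : Ctx} {x : String} {τ : HTyp} :
        Inconsistent τ (.arr .hole .hole) →
        AnaAct Γ (.cursor .hole) τ (.construct (.lam x))
          (.nehole (.ascR (.lam x .hole) (.arrL (.cursor .hole) .hole)))
    | conLit {Γ : Ctx} {n : Nat} {τ : HTyp} :
        Inconsistent τ .num →
        AnaAct Γ (.cursor .hole) τ (.construct (.lit n)) (.nehole (.cursor (.lit n)))
    | finish {Γ : Ctx} {e : HExp} {τ : HTyp} :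
        Ana Γ e τ →
        AnaAct Γ (.cursor (.nehole e)) τ .finish (.cursor e)
    | zipLam {Γ : Ctx} {x : String} {ze ze' : ZExp} {τ τ₁ τ₂ : HTyp} {α : HAction} :
        MArr τ τ₁ τ₂ → AnaAct (Γ.extend x τ₁) ze τ₂ α ze' →
        AnaAct Γ (.lam x ze) τ α (.lam x ze')
end

/-- Iterated type action judgement. -/
inductive TActI : ZTyp → List HAction → ZTyp → Prop
  | refl {zt : ZTyp} : TActI zt [] zt
  | cons {zt zt' zt'' : ZTyp} {α : HAction} {αs : List HAction} :
      TAct zt α zt' → TActI zt' αs zt'' → TActI zt (α :: αs) zt''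

/-- Iterated synthetic action judgement. -/
inductive SynActI : Ctx → ZExp → HTyp → List HAction → ZExp → HTyp → Prop
  | refl {Γ : Ctx} {ze : ZExp} {τ : HTyp} : SynActI Γ ze τ [] ze τ
  | cons {Γ : Ctx} {ze ze' ze'' : ZExp} {τ τ' τ'' : HTyp} {α : HAction} {αs : List HAction} :
      SynAct Γ ze τ α ze' τ' → SynActI Γ ze' τ' αs ze'' τ'' →
      SynActI Γ ze τ (α :: αs) ze'' τ''

/-- Iterated analytic action judgement. -/
inductive AnaActI : Ctx → ZExp → HTyp → List HAction → ZExp → Prop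
  | refl {Γ : Ctx} {ze : ZExp} {τ : HTyp} : AnaActI Γ ze τ [] ze
  | cons {Γ : Ctx} {ze ze' ze'' : ZExp} {τ : HTyp} {α : HAction} {αs : List HAction} :
      AnaAct Γ ze τ α ze' → AnaActI Γ ze' τ αs ze'' →
      AnaActI Γ ze τ (α :: αs) ze''

/-- Every action in the list is a movement action. -/
inductive Movements : List HAction → Prop
  | nil : Movements []
  | cons {δ : Dir} {αs : List HAction} :
      Movements αs → Movements (.move δ :: αs)

theorem tact_move_erase {zt zt' : ZTyp} {δ : Dir}
    (h : TAct zt (.move δ) zt') : zt'.erase = zt.erase := by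
  generalize hα : HAction.move δ = α at h
  induction h <;> cases hα <;> simp_all [ZTyp.erase]

theorem emove_erase {ze ze' : ZExp} {δ : Dir}
    (h : EMove ze δ ze') : ze'.erase = ze.erase := by
  induction h <;> simp [ZExp.erase, ZTyp.erase, *]
  case ascZip2 t => exact tact_move_erase t

theorem consistent_symm {τ τ' : HTyp} (h : Consistent τ τ') : Consistent τ' τ := by
  induction h with
  | holeR => exact .holeL _
  | holeL => exact .holeR _
  | refl => exact .refl _
  | arr _ _ ih1 ih2 => exact .arr ih1 ih2

theorem marr_det {τ a b a' b' : HTyp} (h : MArr τ a b) (h' : MArr τ a' b') :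
    a = a' ∧ b = b' := by
  cases h <;> cases h' <;> exact ⟨rfl, rfl⟩

theorem syn_no_lam {Γ : Ctx} {x : String} {e : HExp} {τ : HTyp}
    (h : Syn Γ (.lam x e) τ) : False := by cases h

theorem syn_unique : ∀ {Γ : Ctx} {e : HExp} {τ τ' : HTyp},
    Syn Γ e τ → Syn Γ e τ' → τ = τ'
  | _, _, _, _, .var h1, .var h2 => by rw [h1] at h2; injection h2
  | _, _, _, _, .asc _, .asc _ => rfl
  | _, _, _, _, .ap s1 m1 _, .ap s2 m2 _ => by
      cases syn_unique s1 s2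
      exact (marr_det m1 m2).2
  | _, _, _, _, .lit _, .lit _ => rfl
  | _, _, _, _, .plus _ _, .plus _ _ => rfl
  | _, _, _, _, .hole, .hole => rfl
  | _, _, _, _, .nehole _, .nehole _ => rfl

mutual

theorem sens_syn {Γ : Ctx} {ze ze' : ZExp} {τ τ' : HTyp} {α : HAction}
    (h : SynAct Γ ze τ α ze' τ') (hs : Syn Γ ze.erase τ) :
    Syn Γ ze'.erase τ' :=
  match h with
  | .move m => (emove_erase m) ▸ hs
  | .del => .hole
  | .conAsc => .asc (.subsume hs (.refl _))
  | .conVar hx => .var hx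
  | .conLam => .asc (.lam (.arr _ _) (.subsume .hole (.refl _)))
  | .conApArr m => .ap hs m (.subsume .hole (.holeR _))
  | .conApOtw _ => .ap (.nehole hs) .hole (.subsume .hole (.refl _))
  | .conLit => .lit _
  | .conPlus1 c => .plus (.subsume hs (consistent_symm c)) (.subsume .hole (.holeR _))
  | .conPlus2 _ => .plus (.subsume (.nehole hs) (.holeR _)) (.subsume .hole (.holeR _))
  | .conNEHole => .nehole hs
  | .finish hsyn => hsyn
  | .zipAsc1 a => by
      cases hs with
      | asc hana => exact .asc (sens_ana a hana)
  | .zipAsc2 _ hana => .asc hana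
  | .zipApArr s2 sact m a => .ap (sens_syn sact s2) m a
  | .zipApAna s m a => by
      cases hs with
      | ap s' m' hana =>
          cases syn_unique s s'
          obtain ⟨h1, h2⟩ := marr_det m m'
          subst h1; subst h2
          exact .ap s m (sens_ana a hana)
  | .zipPlus1 a => by
      cases hs with
      | plus h1 h2 => exact .plus (sens_ana a h1) h2
  | .zipPlus2 a => by
      cases hs with
      | plus h1 h2 => exact .plus h1 (sens_ana a h2)
  | .zipHole s sact => .nehole (sens_syn sact s)

theorem sens_ana {Γ : Ctx} {ze ze' : ZExp} {τ : HTyp} {α : HAction}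
    (h : AnaAct Γ ze τ α ze') (ha : Ana Γ ze.erase τ) :
    Ana Γ ze'.erase τ :=
  match h with
  | .subsume s sact c => .subsume (sens_syn sact s) c
  | .move m => (emove_erase m) ▸ ha
  | .del => .subsume .hole (.holeR _)
  | .conAsc => by
      exact .subsume (.asc ha) (.refl _)
  | .conVar hx _ => .subsume (.nehole (.var hx)) (.holeR _)
  | .conLam1 m => .lam m (.subsume .hole (.holeR _))
  | .conLam2 _ =>
      .subsume (.nehole (.asc (.lam (.arr _ _) (.subsume .hole (.refl _))))) (.holeR _)
  | .conLit _ => .subsume (.nehole (.lit _)) (.holeR _)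
  | .finish hana => hana
  | .zipLam m a => by
      cases ha with
      | lam m' hbody =>
          obtain ⟨h1, h2⟩ := marr_det m m'
          subst h1; subst h2
          exact .lam m (sens_ana a hbody)
      | subsume s _ => exact absurd s syn_no_lam

end

/-- Action Sensibility (analytic clause). -/
theorem action_sensibility_ana
    {Γ : Ctx} {ze ze' : ZExp} {τ : HTyp} {α : HAction}
    (hana : Ana Γ ze.erase τ) (hact : AnaAct Γ ze τ α ze') :
    Ana Γ ze'.erase τ := sens_ana hact hana
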